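/- arXiv:1607.02005 — 3 statements merged into one kernel-verified Lean document; each statement's English description precedes it below -/
import Mathlib

section
/- (Uniqueness via the mutual coherence.) Let D be a convolutional dictionary with mutual coherence μ(D) > 0, and let Γ ∈ ℝ^{mN} satisfy ‖Γ‖_{0,∞} < (1/2)·(1 + 1/μ(D)). Then every Γ̂ ≠ Γ with DΓ̂ = DΓ satisfies ‖Γ̂‖_{0,∞} > ‖Γ‖_{0,∞}; that is, Γ is the unique sparsest solution, in the ℓ_{0,∞} sense, representing the signal DΓ. -/
open Finset

noncomputable section

attribute [local instance] Classical.propDecidable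

/-- The stripe index set `S i`: all column indices `(t, j)` whose shift position `t` lies in the
cyclic window `{i - n + 1, …, i + n - 1}` (mod `N`). -/
def stripeSet (N n m : ℕ) [NeZero N] (i : ZMod N) : Finset (ZMod N × Fin m) :=
  Finset.univ.filter (fun a =>
    ∃ s ∈ Finset.Icc (-(n : ℤ) + 1) ((n : ℤ) - 1), a.1 = i + (s : ZMod N))

/-- The number of nonzero entries of `Γ` in the `i`-th stripe. -/
def stripeNnz (N n m : ℕ) [NeZero N] (Γ : ZMod N × Fin m → ℝ) (i : ZMod N) : ℕ :=
  ((stripeSet N n m i).filter (fun a => Γ a ≠ 0)).card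

/-- The `ℓ_{0,∞}` norm of a global vector: the maximal number of nonzeros in a stripe. -/
def l0inf (N n m : ℕ) [NeZero N] (Γ : ZMod N × Fin m → ℝ) : ℕ :=
  Finset.univ.sup (fun i : ZMod N => stripeNnz N n m Γ i)

/-- Inner product of two columns of `D`. -/
def colInner {N m : ℕ} [NeZero N] (D : Matrix (ZMod N) (ZMod N × Fin m) ℝ)
    (a b : ZMod N × Fin m) : ℝ :=
  ∑ t, D t a * D t b

/-- The mutual coherence `μ(D)`: the maximal absolute inner product between distinct columns. -/
def mutualCoherence {N m : ℕ} [NeZero N] (D : Matrix (ZMod N) (ZMod N × Fin m) ℝ) : ℝ :=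
  sSup {x | ∃ a b : ZMod N × Fin m, a ≠ b ∧ x = |colInner D a b|}

/-- `D` is a convolutional dictionary: its columns are the cyclic shifts of the columns of a
local dictionary `D_L ∈ ℝ^{n×m}`, and all columns have unit `ℓ2` norm. -/
def IsConvDict (N n m : ℕ) [NeZero N] (D : Matrix (ZMod N) (ZMod N × Fin m) ℝ) : Prop :=
  (∃ DL : Fin n → Fin m → ℝ, ∀ (i t : ZMod N) (j : Fin m),
      D t (i, j) = if h : (t - i).val < n then DL ⟨(t - i).val, h⟩ j else 0) ∧
  ∀ a : ZMod N × Fin m, ∑ t, (D t a) ^ 2 = 1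

/-- The shifted mutual coherence `μ_s`: the maximal absolute inner product between a column at
shift position `i` and a column at shift position `i + s` (distinct columns when `s = 0`). -/
def shiftedMu {N m : ℕ} [NeZero N] (D : Matrix (ZMod N) (ZMod N × Fin m) ℝ) (s : ℤ) : ℝ :=
  sSup {x | ∃ (i : ZMod N) (j l : Fin m), (s = 0 → j ≠ l) ∧
    x = |colInner D (i, j) (i + (s : ZMod N), l)|}

/-- `n_{i,s}(Γ)`: the number of nonzeros of `Γ` in the local chunk at shift `s` of the
`i`-th stripe. -/
def shiftNnz (N m : ℕ) [NeZero N] (Γ : ZMod N × Fin m → ℝ) (i : ZMod N) (s : ℤ) : ℕ :=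
  (Finset.univ.filter (fun j : Fin m => Γ (i + (s : ZMod N), j) ≠ 0)).card

/-- The stripe coherence `ζ_i(Γ) = Σ_s n_{i,s}(Γ) · μ_s`. -/
def stripeCoherence (N n m : ℕ) [NeZero N] (D : Matrix (ZMod N) (ZMod N × Fin m) ℝ)
    (Γ : ZMod N × Fin m → ℝ) (i : ZMod N) : ℝ :=
  ∑ s ∈ Finset.Icc (-(n : ℤ) + 1) ((n : ℤ) - 1), (shiftNnz N m Γ i s : ℝ) * shiftedMu D s

/-- The Stripe-Spark `σ_∞(D)`: the least `ℓ_{0,∞}` norm of a nonzero vector in the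
null space of `D` (`⊤` if the null space is trivial). -/
def stripeSpark (N n m : ℕ) [NeZero N] (D : Matrix (ZMod N) (ZMod N × Fin m) ℝ) : ℕ∞ :=
  sInf {k : ℕ∞ | ∃ Δ : ZMod N × Fin m → ℝ, Δ ≠ 0 ∧ D.mulVec Δ = 0 ∧ (l0inf N n m Δ : ℕ∞) = k}

/-- The `ℓ1` norm of a global vector. -/
def l1norm {N m : ℕ} [NeZero N] (Γ : ZMod N × Fin m → ℝ) : ℝ :=
  ∑ a, |Γ a|

lemma mem_stripeSet_self {N n m : ℕ} [NeZero N] (hn : 1 ≤ n) (i : ZMod N) (j : Fin m) :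
    (i, j) ∈ stripeSet N n m i := by
  simp only [stripeSet, Finset.mem_filter, Finset.mem_univ, true_and]
  exact ⟨0, by simp only [Finset.mem_Icc]; omega, by simp⟩

lemma abs_colInner_le {N m : ℕ} [NeZero N] (D : Matrix (ZMod N) (ZMod N × Fin m) ℝ)
    {a b : ZMod N × Fin m} (hab : a ≠ b) : |colInner D a b| ≤ mutualCoherence D := by
  apply le_csSup
  · apply Set.Finite.bddAbove
    apply Set.Finite.subset
      (Set.finite_range fun p : (ZMod N × Fin m) × (ZMod N × Fin m) => |colInner D p.1 p.2|)
    rintro x ⟨a, b, -, rfl⟩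
    exact ⟨(a, b), rfl⟩
  · exact ⟨a, b, hab, rfl⟩

lemma colInner_eq_zero {N n m : ℕ} [NeZero N] {D : Matrix (ZMod N) (ZMod N × Fin m) ℝ}
    (hD : IsConvDict N n m D) (a b : ZMod N × Fin m)
    (hb : b ∉ stripeSet N n m a.1) : colInner D a b = 0 := by
  obtain ⟨⟨DL, hDL⟩, -⟩ := hD
  apply Finset.sum_eq_zero
  intro t _
  by_contra h
  have ha : D t a ≠ 0 := fun h0 => h (by rw [h0, zero_mul])
  have hb' : D t b ≠ 0 := fun h0 => h (by rw [h0, mul_zero])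
  rw [hDL a.1 t a.2] at ha
  rw [hDL b.1 t b.2] at hb'
  have h1 : (t - a.1).val < n := by
    by_contra hc; rw [dif_neg hc] at ha; exact ha rfl
  have h2 : (t - b.1).val < n := by
    by_contra hc; rw [dif_neg hc] at hb'; exact hb' rfl
  apply hb
  simp only [stripeSet, Finset.mem_filter, Finset.mem_univ, true_and]
  refine ⟨((t - a.1).val : ℤ) - ((t - b.1).val : ℤ), by simp only [Finset.mem_Icc]; omega, ?_⟩
  push_cast
  rw [ZMod.natCast_val, ZMod.natCast_val, ZMod.cast_id, ZMod.cast_id]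
  ring

lemma colInner_self {N n m : ℕ} [NeZero N] {D : Matrix (ZMod N) (ZMod N × Fin m) ℝ}
    (hD : IsConvDict N n m D) (a : ZMod N × Fin m) : colInner D a a = 1 := by
  rw [colInner]
  rw [← hD.2 a]
  exact Finset.sum_congr rfl fun t _ => (sq (D t a)).symm

/-- Uniqueness via the mutual coherence: if
`‖Γ‖_{0,∞} < (1/2)(1 + 1/μ(D))`, then every other representation of the signal `DΓ` has a
strictly larger `ℓ_{0,∞}` norm. -/
theorem uniqueness_mutualCoherence (N n m : ℕ) [NeZero N]
    (hm : 1 ≤ m) (hn : 1 ≤ n) (hN : 2 * n - 1 ≤ N)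
    (D : Matrix (ZMod N) (ZMod N × Fin m) ℝ) (hD : IsConvDict N n m D)
    (hμ : 0 < mutualCoherence D)
    (Γ : ZMod N × Fin m → ℝ)
    (hΓ : (l0inf N n m Γ : ℝ) < (1 / 2) * (1 + 1 / mutualCoherence D)) :
    ∀ Γ' : ZMod N × Fin m → ℝ, Γ' ≠ Γ → D.mulVec Γ' = D.mulVec Γ →
      l0inf N n m Γ < l0inf N n m Γ' := by
  intro Γ' hne hrep
  set μ := mutualCoherence D with hμdef
  set Δ : ZMod N × Fin m → ℝ := fun a => Γ' a - Γ a with hΔdef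
  have hΔne : ∃ a, Δ a ≠ 0 := by
    by_contra hc
    push_neg at hc
    exact hne (funext fun a => by have := hc a; simp only [hΔdef] at this; linarith)
  -- D Δ = 0 componentwise
  have hDΔ : ∀ t, ∑ b, D t b * Δ b = 0 := by
    intro t
    have := congrFun hrep t
    simp only [Matrix.mulVec, dotProduct] at this
    simp only [hΔdef, mul_sub, Finset.sum_sub_distrib]
    linarith
  -- pick a maximizing |Δ a|
  obtain ⟨a0, ha0⟩ := hΔne
  obtain ⟨a, -, hamax⟩ := Finset.exists_max_image Finset.univ (fun b => |Δ b|)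
    ⟨a0, Finset.mem_univ a0⟩
  have haΔ : Δ a ≠ 0 := by
    intro h
    have := hamax a0 (Finset.mem_univ a0)
    rw [h] at this
    simp only [abs_zero] at this
    exact ha0 (abs_nonpos_iff.mp (by linarith [abs_nonneg (Δ a0)]))
  have hMpos : 0 < |Δ a| := abs_pos.mpr haΔ
  -- Gershgorin
  have key : ∑ b, colInner D a b * Δ b = 0 := by
    have : ∑ b, colInner D a b * Δ b = ∑ t, D t a * (∑ b, D t b * Δ b) := by
      simp only [colInner, Finset.sum_mul, Finset.mul_sum]
      rw [Finset.sum_comm]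
      apply Finset.sum_congr rfl; intro b _
      apply Finset.sum_congr rfl; intro t _
      ring
    rw [this]
    simp only [hDΔ, mul_zero, Finset.sum_const_zero]
  have hsplit : colInner D a a * Δ a + ∑ b ∈ Finset.univ.erase a, colInner D a b * Δ b = 0 :=
    (Finset.add_sum_erase Finset.univ (fun b => colInner D a b * Δ b)
      (Finset.mem_univ a)).trans key
  rw [colInner_self hD, one_mul] at hsplit
  have habs : |Δ a| ≤ ∑ b ∈ Finset.univ.erase a, |colInner D a b| * |Δ b| := by
    have : Δ a = -∑ b ∈ Finset.univ.erase a, colInner D a b * Δ b := by linarith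
    calc |Δ a| = |∑ b ∈ Finset.univ.erase a, colInner D a b * Δ b| := by rw [this, abs_neg]
    _ ≤ ∑ b ∈ Finset.univ.erase a, |colInner D a b * Δ b| := Finset.abs_sum_le_sum_abs _ _
    _ = ∑ b ∈ Finset.univ.erase a, |colInner D a b| * |Δ b| := by
        apply Finset.sum_congr rfl; intro b _; exact abs_mul _ _
  -- restrict the sum to the effective set T
  set T : Finset (ZMod N × Fin m) :=
    ((stripeSet N n m a.1).filter (fun b => Δ b ≠ 0)).erase a with hTdef
  have hsum_restrict : ∑ b ∈ Finset.univ.erase a, |colInner D a b| * |Δ b|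
      = ∑ b ∈ T, |colInner D a b| * |Δ b| := by
    symm
    apply Finset.sum_subset
    · intro b hb
      simp only [hTdef, Finset.mem_erase, Finset.mem_filter] at hb
      exact Finset.mem_erase.mpr ⟨hb.1, Finset.mem_univ b⟩
    · intro b hb hbT
      simp only [hTdef, Finset.mem_erase, Finset.mem_filter, not_and, not_not] at hbT
      have hba : b ≠ a := (Finset.mem_erase.mp hb).1
      by_cases hbs : b ∈ stripeSet N n m a.1
      · rw [hbT hba hbs, abs_zero, mul_zero]
      · rw [colInner_eq_zero hD a b hbs, abs_zero, zero_mul]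
  -- bound each term
  have hterm : ∀ b ∈ T, |colInner D a b| * |Δ b| ≤ μ * |Δ a| := by
    intro b hb
    have hba : b ≠ a := (Finset.mem_erase.mp hb).1
    have h1 : |colInner D a b| ≤ μ := abs_colInner_le D (Ne.symm hba)
    have h2 : |Δ b| ≤ |Δ a| := hamax b (Finset.mem_univ b)
    exact mul_le_mul h1 h2 (abs_nonneg _) (le_trans (abs_nonneg _) h1)
  have hsum_le : ∑ b ∈ T, |colInner D a b| * |Δ b| ≤ T.card * (μ * |Δ a|) := by
    calc ∑ b ∈ T, |colInner D a b| * |Δ b| ≤ ∑ _b ∈ T, μ * |Δ a| :=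
          Finset.sum_le_sum hterm
    _ = T.card * (μ * |Δ a|) := by rw [Finset.sum_const, nsmul_eq_mul]
  -- the cardinality of T
  set k : ℕ := stripeNnz N n m Δ a.1 with hkdef
  have hamem : a ∈ (stripeSet N n m a.1).filter (fun b => Δ b ≠ 0) :=
    Finset.mem_filter.mpr ⟨mem_stripeSet_self hn a.1 a.2, haΔ⟩
  have hk1 : 1 ≤ k := Finset.card_pos.mpr ⟨a, hamem⟩
  have hTcard : T.card = k - 1 := by
    rw [hTdef, Finset.card_erase_of_mem hamem]
    rfl
  have hTcardR : (T.card : ℝ) = (k : ℝ) - 1 := by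
    rw [hTcard, Nat.cast_sub hk1, Nat.cast_one]
  -- Gershgorin conclusion : (k : ℝ) ≥ 1 + 1/μ
  have hkey : 1 + 1 / μ ≤ (k : ℝ) := by
    have h := le_trans habs (le_of_eq_of_le hsum_restrict hsum_le)
    rw [hTcardR] at h
    have h1 : (1 : ℝ) ≤ ((k : ℝ) - 1) * μ := by
      nlinarith [hMpos]
    have h2 : 1 / μ ≤ (k : ℝ) - 1 := (div_le_iff₀ hμ).mpr (by linarith)
    linarith
  -- stripe counting
  have hcount : k ≤ stripeNnz N n m Γ' a.1 + stripeNnz N n m Γ a.1 := by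
    rw [hkdef, stripeNnz, stripeNnz, stripeNnz]
    refine le_trans (Finset.card_le_card ?_) (Finset.card_union_le _ _)
    intro b hb
    simp only [Finset.mem_filter, Finset.mem_union] at hb ⊢
    rcases hb with ⟨hbs, hbne⟩
    by_cases hg : Γ b = 0
    · exact Or.inl ⟨hbs, fun h0 => hbne (by simp only [hΔdef]; rw [h0, hg, sub_zero])⟩
    · exact Or.inr ⟨hbs, hg⟩
  have hs1 : stripeNnz N n m Γ' a.1 ≤ l0inf N n m Γ' :=
    Finset.le_sup (Finset.mem_univ a.1)
  have hs2 : stripeNnz N n m Γ a.1 ≤ l0inf N n m Γ :=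
    Finset.le_sup (Finset.mem_univ a.1)
  -- conclude
  have hfin : (l0inf N n m Γ : ℝ) < (l0inf N n m Γ' : ℝ) := by
    have hc : (k : ℝ) ≤ (l0inf N n m Γ' : ℝ) + (l0inf N n m Γ : ℝ) := by
      have := le_trans hcount (add_le_add hs1 hs2)
      exact_mod_cast this
    linarith
  exact_mod_cast hfin

end
end

section
/- (Basis Pursuit recovery guarantee under the ℓ_{0,∞} bound.) Let D be a convolutional dictionary with mutual coherence μ(D) > 0, and let Γ ∈ ℝ^{mN} satisfy ‖Γ‖_{0,∞} < (1/2)·(1 + 1/μ(D)). Then Γ is the unique minimizer of the ℓ1 norm over the affine set {Γ̂ ∈ ℝ^{mN} : DΓ̂ = DΓ}; i.e. every Γ̂ ≠ Γ with DΓ̂ = DΓ satisfies ‖Γ̂‖_1 > ‖Γ‖_1. -/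
open Finset

noncomputable section

attribute [local instance] Classical.propDecidable

section BPAux

variable {N n m : ℕ} [NeZero N]

lemma abs_colInner_le_one (D : Matrix (ZMod N) (ZMod N × Fin m) ℝ)
    (hunit : ∀ a : ZMod N × Fin m, ∑ t, (D t a) ^ 2 = 1)
    (a b : ZMod N × Fin m) : |colInner D a b| ≤ 1 := by
  have h := Finset.sum_mul_sq_le_sq_mul_sq Finset.univ (fun t => D t a) (fun t => D t b)
  rw [hunit a, hunit b] at h
  have h2 : (colInner D a b) ^ 2 ≤ 1 := by simpa [colInner] using h
  nlinarith [abs_nonneg (colInner D a b), sq_abs (colInner D a b)]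

lemma abs_colInner_le_mu (D : Matrix (ZMod N) (ZMod N × Fin m) ℝ)
    (hunit : ∀ a : ZMod N × Fin m, ∑ t, (D t a) ^ 2 = 1)
    {a b : ZMod N × Fin m} (hab : a ≠ b) :
    |colInner D a b| ≤ mutualCoherence D := by
  apply le_csSup
  · exact ⟨1, by rintro x ⟨a, b, -, rfl⟩; exact abs_colInner_le_one D hunit a b⟩
  · exact ⟨a, b, hab, rfl⟩

lemma intCast_inj_Icc (hn : 1 ≤ n) (hN : 2 * n - 1 ≤ N)
    {s s' : ℤ} (hs : s ∈ Finset.Icc (-(n : ℤ) + 1) ((n : ℤ) - 1))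
    (hs' : s' ∈ Finset.Icc (-(n : ℤ) + 1) ((n : ℤ) - 1))
    (h : (s : ZMod N) = (s' : ZMod N)) : s = s' := by
  rw [ZMod.intCast_eq_intCast_iff] at h
  have hd : (N : ℤ) ∣ (s' - s) := Int.ModEq.dvd h
  simp only [Finset.mem_Icc] at hs hs'
  by_contra hne
  have h0 : s' - s ≠ 0 := fun hc => hne (by omega)
  have habs : (N : ℤ) ≤ |s' - s| := Int.le_of_dvd (abs_pos.mpr h0) ((dvd_abs _ _).mpr hd)
  rcases abs_cases (s' - s) with ⟨h1, _⟩ | ⟨h1, _⟩ <;> omega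

lemma stripeSet_eq_image (i : ZMod N) :
    stripeSet N n m i =
      ((Finset.Icc (-(n : ℤ) + 1) ((n : ℤ) - 1)) ×ˢ (Finset.univ : Finset (Fin m))).image
        (fun p : ℤ × Fin m => (i + (p.1 : ZMod N), p.2)) := by
  ext a
  simp only [stripeSet, Finset.mem_filter, Finset.mem_univ, true_and, Finset.mem_image,
    Finset.mem_product]
  constructor
  · rintro ⟨s, hs, ha⟩
    refine ⟨(s, a.2), by simpa using hs, ?_⟩
    rw [← ha]
  · rintro ⟨p, hp, rfl⟩
    exact ⟨p.1, hp.1, rfl⟩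

lemma stripe_sum (hn : 1 ≤ n) (hN : 2 * n - 1 ≤ N) (i : ZMod N) (f : ZMod N × Fin m → ℝ) :
    ∑ a ∈ stripeSet N n m i, f a
      = ∑ s ∈ Finset.Icc (-(n : ℤ) + 1) ((n : ℤ) - 1), ∑ j : Fin m, f (i + (s : ZMod N), j) := by
  rw [stripeSet_eq_image i, Finset.sum_image, Finset.sum_product]
  rintro ⟨s, j⟩ hp ⟨s', j'⟩ hp' h
  simp only [Prod.mk.injEq] at h
  obtain ⟨h1, h2⟩ := h
  have hs := (Finset.mem_product.mp hp).1
  have hs' := (Finset.mem_product.mp hp').1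
  have hcast : (s : ZMod N) = (s' : ZMod N) := by
    have := add_left_cancel h1
    exact this
  exact Prod.ext (intCast_inj_Icc hn hN hs hs' hcast) h2

end BPAux

section BPKey

variable {N n m : ℕ} [NeZero N]

lemma colInner_eq_zero_of_far (D : Matrix (ZMod N) (ZMod N × Fin m) ℝ)
    (hD : IsConvDict N n m D) {a b : ZMod N × Fin m}
    (hb : b ∉ stripeSet N n m a.1) : colInner D a b = 0 := by
  obtain ⟨⟨DL, hDL⟩, -⟩ := hD
  obtain ⟨i, j⟩ := a
  obtain ⟨i', l⟩ := b
  simp only [stripeSet, Finset.mem_filter, Finset.mem_univ, true_and] at hb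
  push_neg at hb
  apply Finset.sum_eq_zero
  intro t _
  rw [hDL, hDL]
  by_cases h1 : (t - i).val < n
  · by_cases h2 : (t - i').val < n
    · exfalso
      refine hb ((((t - i).val : ℤ)) - (((t - i').val : ℤ))) ?_ ?_
      · rw [Finset.mem_Icc]; omega
      · have hcast : (((((t - i).val : ℤ)) - (((t - i').val : ℤ)) : ℤ) : ZMod N)
            = (t - i) - (t - i') := by
          push_cast [ZMod.natCast_val, ZMod.cast_id]
          ring
        rw [hcast]
        ring
    · rw [dif_neg h2, mul_zero]
  · rw [dif_neg h1, zero_mul]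

lemma key_bound (hn : 1 ≤ n) (D : Matrix (ZMod N) (ZMod N × Fin m) ℝ)
    (hD : IsConvDict N n m D)
    (Δ : ZMod N × Fin m → ℝ) (hDΔ : D.mulVec Δ = 0) (a : ZMod N × Fin m) :
    (1 + mutualCoherence D) * |Δ a| ≤
      mutualCoherence D * ∑ b ∈ stripeSet N n m a.1, |Δ b| := by
  have hunit := hD.2
  set μ := mutualCoherence D with hμ
  have h0 : ∑ b, colInner D a b * Δ b = 0 := by
    calc ∑ b, colInner D a b * Δ b
        = ∑ b, ∑ t, D t a * D t b * Δ b := by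
          refine Finset.sum_congr rfl fun b _ => ?_
          rw [colInner, Finset.sum_mul]
      _ = ∑ t, ∑ b, D t a * D t b * Δ b := Finset.sum_comm
      _ = ∑ t, D t a * ∑ b, D t b * Δ b := by
          refine Finset.sum_congr rfl fun t _ => ?_
          rw [Finset.mul_sum]
          exact Finset.sum_congr rfl fun b _ => by ring
      _ = ∑ t, D t a * (D.mulVec Δ t) := rfl
      _ = 0 := by rw [hDΔ]; simp
  have hstripe0 : ∑ b ∈ stripeSet N n m a.1, colInner D a b * Δ b = 0 :=
    (Finset.sum_subset (Finset.subset_univ _) (fun b _ hb => by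
      rw [colInner_eq_zero_of_far D hD hb, zero_mul])).trans h0
  have haa : colInner D a a = 1 := by
    rw [colInner]
    simpa [pow_two] using hunit a
  have hamem : a ∈ stripeSet N n m a.1 := by
    simp only [stripeSet, Finset.mem_filter, Finset.mem_univ, true_and]
    refine ⟨0, Finset.mem_Icc.mpr (by omega), by simp⟩
  have hsplit : colInner D a a * Δ a
      + ∑ b ∈ (stripeSet N n m a.1).erase a, colInner D a b * Δ b
      = ∑ b ∈ stripeSet N n m a.1, colInner D a b * Δ b :=
    Finset.add_sum_erase _ (fun b => colInner D a b * Δ b) hamem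
  rw [hstripe0, haa, one_mul] at hsplit
  have hΔa : Δ a = -∑ b ∈ (stripeSet N n m a.1).erase a, colInner D a b * Δ b := by
    linarith
  set E : ℝ := ∑ b ∈ (stripeSet N n m a.1).erase a, |Δ b| with hE
  have habs : |Δ a| ≤ μ * E := by
    calc |Δ a| = |∑ b ∈ (stripeSet N n m a.1).erase a, colInner D a b * Δ b| := by
          rw [hΔa, abs_neg]
      _ ≤ ∑ b ∈ (stripeSet N n m a.1).erase a, |colInner D a b * Δ b| :=
          Finset.abs_sum_le_sum_abs _ _
      _ ≤ ∑ b ∈ (stripeSet N n m a.1).erase a, μ * |Δ b| := by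
          refine Finset.sum_le_sum fun b hb => ?_
          rw [abs_mul]
          exact mul_le_mul_of_nonneg_right
            (abs_colInner_le_mu D hunit (Finset.ne_of_mem_erase hb).symm) (abs_nonneg _)
      _ = μ * E := (Finset.mul_sum _ _ _).symm
  have hEs : |Δ a| + E = ∑ b ∈ stripeSet N n m a.1, |Δ b| :=
    Finset.add_sum_erase _ (fun b => |Δ b|) hamem
  have h2 : μ * |Δ a| + μ * E = μ * ∑ b ∈ stripeSet N n m a.1, |Δ b| := by
    rw [← mul_add, hEs]
  linarith

end BPKey

/-- Basis Pursuit recovery guarantee under the `ℓ_{0,∞}` bound: if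
`‖Γ‖_{0,∞} < (1/2)(1 + 1/μ(D))`, then `Γ` is the unique `ℓ1` minimizer among all representations
of the signal `DΓ`. -/
theorem bp_recovery_l0inf (N n m : ℕ) [NeZero N]
    (hm : 1 ≤ m) (hn : 1 ≤ n) (hN : 2 * n - 1 ≤ N)
    (D : Matrix (ZMod N) (ZMod N × Fin m) ℝ) (hD : IsConvDict N n m D)
    (hμ : 0 < mutualCoherence D)
    (Γ : ZMod N × Fin m → ℝ)
    (hΓ : (l0inf N n m Γ : ℝ) < (1 / 2) * (1 + 1 / mutualCoherence D)) :
    ∀ Γ' : ZMod N × Fin m → ℝ, Γ' ≠ Γ → D.mulVec Γ' = D.mulVec Γ →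
      l1norm Γ < l1norm Γ' := by
  intro Γ' hne heq
  classical
  set μ := mutualCoherence D with hμdef
  set Δ : ZMod N × Fin m → ℝ := fun a => Γ' a - Γ a with hΔdef
  have hDΔ : D.mulVec Δ = 0 := by
    have h : Δ = Γ' - Γ := rfl
    rw [h, Matrix.mulVec_sub, heq, sub_self]
  set T : Finset (ZMod N × Fin m) := Finset.univ.filter (fun a => Γ a ≠ 0) with hT
  set S : ℝ := ∑ a ∈ T, |Δ a| with hS
  set L : ℝ := l1norm Δ with hLdef
  set k : ℕ := l0inf N n m Γ with hkdef
  set pL : ZMod N → ℝ := fun t => ∑ j, |Δ (t, j)| with hpL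
  set pN : ZMod N → ℝ := fun t => ∑ j : Fin m, (if Γ (t, j) ≠ 0 then (1 : ℝ) else 0) with hpN
  set sL : ZMod N → ℝ := fun i => ∑ b ∈ stripeSet N n m i, |Δ b| with hsL
  set Icc' : Finset ℤ := Finset.Icc (-(n : ℤ) + 1) ((n : ℤ) - 1) with hIcc
  -- L > 0
  have hL0 : 0 < L := by
    obtain ⟨a, ha⟩ : ∃ a, Δ a ≠ 0 := by
      by_contra h
      push_neg at h
      exact hne (funext fun a => by have := h a; simp only [hΔdef] at this; linarith)
    refine Finset.sum_pos' (fun b _ => abs_nonneg _) ⟨a, Finset.mem_univ a, abs_pos.mpr ha⟩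
  -- step 4 : (1+μ) S ≤ μ ∑_{a∈T} sL a.1
  have hstep4 : (1 + μ) * S ≤ μ * ∑ a ∈ T, sL a.1 := by
    rw [hS, Finset.mul_sum, Finset.mul_sum]
    exact Finset.sum_le_sum fun a _ => key_bound hn D hD Δ hDΔ a
  -- step 5 : grouping
  have hstep5 : ∑ a ∈ T, sL a.1 = ∑ i, pN i * sL i := by
    rw [hT, Finset.sum_filter, Fintype.sum_prod_type]
    refine Finset.sum_congr rfl fun i _ => ?_
    rw [hpN, Finset.sum_mul]
    exact Finset.sum_congr rfl fun j _ => by split_ifs <;> simp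
  -- step 6 : stripe decomposition of sL
  have hstep6 : ∀ i, sL i = ∑ s ∈ Icc', pL (i + (s : ZMod N)) := fun i =>
    stripe_sum hn hN i (fun b => |Δ b|)
  -- stripeNnz decomposition
  have hstr : ∀ t : ZMod N, ∑ s ∈ Icc', pN (t + (s : ZMod N)) = (stripeNnz N n m Γ t : ℝ) := by
    intro t
    rw [stripeNnz, ← Finset.sum_boole, stripe_sum hn hN t (fun a => if Γ a ≠ 0 then (1:ℝ) else 0)]
  -- step 7 : ∑ i, pN i * sL i = ∑ t, pL t * stripeNnz t
  have hstep7 : ∑ i, pN i * sL i = ∑ t, pL t * (stripeNnz N n m Γ t : ℝ) := by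
    calc ∑ i, pN i * sL i
        = ∑ i, ∑ s ∈ Icc', pN i * pL (i + (s : ZMod N)) := by
          refine Finset.sum_congr rfl fun i _ => ?_
          rw [hstep6 i, Finset.mul_sum]
      _ = ∑ s ∈ Icc', ∑ i, pN i * pL (i + (s : ZMod N)) := Finset.sum_comm
      _ = ∑ s ∈ Icc', ∑ t, pN (t - (s : ZMod N)) * pL t := by
          refine Finset.sum_congr rfl fun s _ => ?_
          exact (Fintype.sum_equiv (Equiv.subRight ((s : ZMod N)))
            (fun t => pN (t - (s : ZMod N)) * pL t)
            (fun i => pN i * pL (i + (s : ZMod N)))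
            (fun t => by simp)).symm
      _ = ∑ t, ∑ s ∈ Icc', pN (t - (s : ZMod N)) * pL t := Finset.sum_comm
      _ = ∑ t, pL t * ∑ s ∈ Icc', pN (t - (s : ZMod N)) := by
          refine Finset.sum_congr rfl fun t _ => ?_
          rw [Finset.mul_sum]
          exact Finset.sum_congr rfl fun s _ => by ring
      _ = ∑ t, pL t * ∑ s ∈ Icc', pN (t + (s : ZMod N)) := by
          refine Finset.sum_congr rfl fun t _ => ?_
          congr 1
          refine Finset.sum_nbij' (fun s => -s) (fun s => -s) ?_ ?_ ?_ ?_ ?_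
          · intro s hs; simp only [hIcc, Finset.mem_Icc] at *; omega
          · intro s hs; simp only [hIcc, Finset.mem_Icc] at *; omega
          · intro s _; ring
          · intro s _; ring
          · intro s _; push_cast; ring_nf
      _ = ∑ t, pL t * (stripeNnz N n m Γ t : ℝ) := by
          refine Finset.sum_congr rfl fun t _ => ?_
          rw [hstr t]
  -- step 8 : bound by k * L
  have hstep8 : ∑ t, pL t * (stripeNnz N n m Γ t : ℝ) ≤ (k : ℝ) * L := by
    have hbound : ∀ t : ZMod N, (stripeNnz N n m Γ t : ℝ) ≤ (k : ℝ) := fun t =>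
      Nat.cast_le.mpr (Finset.le_sup (f := fun i => stripeNnz N n m Γ i) (Finset.mem_univ t))
    have hLsum : L = ∑ t, pL t := by
      rw [hLdef, l1norm, Fintype.sum_prod_type]
    calc ∑ t, pL t * (stripeNnz N n m Γ t : ℝ)
        ≤ ∑ t, pL t * (k : ℝ) := Finset.sum_le_sum fun t _ =>
          mul_le_mul_of_nonneg_left (hbound t)
            (Finset.sum_nonneg fun j _ => abs_nonneg _)
      _ = (k : ℝ) * L := by
          rw [hLsum, Finset.mul_sum]
          exact Finset.sum_congr rfl fun t _ => mul_comm _ _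
  -- combine : (1+μ) S ≤ μ * (k * L)
  have hSbound : (1 + μ) * S ≤ μ * ((k : ℝ) * L) := by
    calc (1 + μ) * S ≤ μ * ∑ a ∈ T, sL a.1 := hstep4
      _ = μ * ∑ t, pL t * (stripeNnz N n m Γ t : ℝ) := by rw [hstep5, hstep7]
      _ ≤ μ * ((k : ℝ) * L) := mul_le_mul_of_nonneg_left hstep8 hμ.le
  -- arithmetic : 2 S < L
  have hkμ : (k : ℝ) * μ < (1 / 2) * (μ + 1) := by
    have h1 : (k : ℝ) * μ < ((1 / 2) * (1 + 1 / μ)) * μ :=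
      mul_lt_mul_of_pos_right hΓ hμ
    have h2 : ((1 / 2) * (1 + 1 / μ)) * μ = (1 / 2) * (μ + 1) := by
      field_simp
    linarith
  have hSL : 2 * S < L := by
    have h3 : μ * ((k : ℝ) * L) < (1 / 2) * (μ + 1) * L := by
      have := mul_lt_mul_of_pos_right hkμ hL0
      nlinarith
    nlinarith
  -- Claim 1 : l1norm Γ' ≥ l1norm Γ + L - 2 S
  have hTsum : ∑ a ∈ T, |Γ a| = l1norm Γ := by
    rw [l1norm, ← Finset.sum_filter_add_sum_filter_not Finset.univ (fun a => Γ a ≠ 0)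
      (fun a => |Γ a|)]
    have : ∑ a ∈ Finset.univ.filter (fun a => ¬Γ a ≠ 0), |Γ a| = 0 := by
      refine Finset.sum_eq_zero fun a ha => ?_
      have := (Finset.mem_filter.mp ha).2
      push_neg at this
      rw [this, abs_zero]
    rw [this, add_zero]
  have hTc : ∑ a ∈ Finset.univ.filter (fun a => ¬Γ a ≠ 0), |Δ a| = L - S := by
    have h := Finset.sum_filter_add_sum_filter_not Finset.univ (fun a => Γ a ≠ 0)
      (fun a => |Δ a|)
    have hL' : L = ∑ a, |Δ a| := by rw [hLdef, l1norm]
    rw [hL']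
    rw [hS, hT]
    linarith [h]
  have hΓ'split : l1norm Γ' = ∑ a ∈ T, |Γ a + Δ a|
      + ∑ a ∈ Finset.univ.filter (fun a => ¬Γ a ≠ 0), |Δ a| := by
    rw [l1norm, ← Finset.sum_filter_add_sum_filter_not Finset.univ (fun a => Γ a ≠ 0)
      (fun a => |Γ' a|)]
    congr 1
    · refine Finset.sum_congr rfl fun a _ => ?_
      congr 1
      simp only [hΔdef]
      ring
    · refine Finset.sum_congr rfl fun a ha => ?_
      have h0 := (Finset.mem_filter.mp ha).2
      push_neg at h0
      congr 1
      simp only [hΔdef, h0]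
      ring
  have hlb : ∑ a ∈ T, (|Γ a| - |Δ a|) ≤ ∑ a ∈ T, |Γ a + Δ a| :=
    Finset.sum_le_sum fun a _ => by
      have := abs_sub_abs_le_abs_sub (Γ a) (-(Δ a))
      simp only [abs_neg, sub_neg_eq_add] at this
      exact this
  have hsub : ∑ a ∈ T, (|Γ a| - |Δ a|) = l1norm Γ - S := by
    rw [Finset.sum_sub_distrib, hTsum, ← hS]
  linarith [hΓ'split, hlb, hsub, hTc, hSL]

end
end

section
/- (First-step OMP inequality with explicit bounds.) Let D be a convolutional dictionary with mutual coherence μ(D), let Γ ∈ ℝ^{mN} have support 𝒯 ≠ ∅, and let i₀ ∈ 𝒯 be an index at which |Γ| attains its maximum. Then the following two bounds hold for X = DΓ: (i) |⟨d_{i₀}, X⟩| ≥ |Γ_{i₀}| − |Γ_{i₀}|·(‖Γ‖_{0,∞} − 1)·μ(D); and (ii) for every j ∉ 𝒯, |⟨d_j, X⟩| ≤ |Γ_{i₀}|·‖Γ‖_{0,∞}·μ(D). -/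
open Finset

noncomputable section

attribute [local instance] Classical.propDecidable

/-! Expanding `⟨d_a, DΓ⟩ = Σ_b Γ_b ⟨d_a, d_b⟩`, only the nonzeros `b` of `Γ` in the stripe of `a`
contribute, since columns whose shifts differ by at least `n` have disjoint supports. There are
at most `‖Γ‖_{0,∞}` of them, and each off-diagonal term is at most `|Γ_{i₀}| μ(D)`; for `a = i₀`
the diagonal term is `Γ_{i₀}`, because the columns have unit norm. -/

section Coherence

variable {N m : ℕ} [NeZero N] (D : Matrix (ZMod N) (ZMod N × Fin m) ℝ)

lemma mutualCoherence_nonneg : 0 ≤ mutualCoherence D :=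
  Real.sSup_nonneg (by rintro x ⟨a, b, -, rfl⟩; positivity)

lemma abs_colInner_le_mutualCoherence {a b : ZMod N × Fin m} (hab : a ≠ b) :
    |colInner D a b| ≤ mutualCoherence D := by
  refine le_csSup ?_ ⟨a, b, hab, rfl⟩
  refine (Set.finite_range fun p : (ZMod N × Fin m) × (ZMod N × Fin m) =>
    |colInner D p.1 p.2|).subset ?_ |>.bddAbove
  rintro x ⟨a, b, -, rfl⟩
  exact ⟨(a, b), rfl⟩

lemma sum_mul_mulVec_eq_sum_colInner (Γ : ZMod N × Fin m → ℝ) (a : ZMod N × Fin m) :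
    ∑ t, D t a * D.mulVec Γ t = ∑ b, Γ b * colInner D a b := by
  simp only [Matrix.mulVec, dotProduct, Finset.mul_sum, colInner]
  rw [Finset.sum_comm]
  exact Finset.sum_congr rfl fun b _ => Finset.sum_congr rfl fun t _ => by ring

end Coherence

lemma mem_stripeSet_of_val_sub_lt {N n m : ℕ} [NeZero N] {t : ZMod N} {a b : ZMod N × Fin m}
    (ha : (t - a.1).val < n) (hb : (t - b.1).val < n) : b ∈ stripeSet N n m a.1 := by
  simp only [stripeSet, Finset.mem_filter, Finset.mem_univ, true_and, Finset.mem_Icc]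
  refine ⟨((t - a.1).val : ℤ) - (t - b.1).val, by omega, ?_⟩
  push_cast [ZMod.natCast_val, ZMod.cast_id]
  ring

lemma self_mem_stripeSet {N n m : ℕ} [NeZero N] (hn : 1 ≤ n) (a : ZMod N × Fin m) :
    a ∈ stripeSet N n m a.1 := by
  simp only [stripeSet, Finset.mem_filter, Finset.mem_univ, true_and, Finset.mem_Icc]
  exact ⟨0, by omega, by simp⟩

lemma card_stripeSet_support_le_l0inf {N n m : ℕ} [NeZero N] (Γ : ZMod N × Fin m → ℝ)
    (i : ZMod N) : ((stripeSet N n m i).filter (Γ · ≠ 0)).card ≤ l0inf N n m Γ :=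
  Finset.le_sup (f := stripeNnz N n m Γ) (Finset.mem_univ i)

namespace IsConvDict

variable {N n m : ℕ} [NeZero N] {D : Matrix (ZMod N) (ZMod N × Fin m) ℝ}

lemma colInner_self (hD : IsConvDict N n m D) (a : ZMod N × Fin m) : colInner D a a = 1 := by
  simpa only [colInner, sq] using hD.2 a

lemma apply_eq_zero_of_le_val_sub (hD : IsConvDict N n m D) {t : ZMod N}
    {a : ZMod N × Fin m} (h : n ≤ (t - a.1).val) : D t a = 0 := by
  obtain ⟨DL, hDL⟩ := hD.1
  rw [hDL a.1 t a.2, dif_neg h.not_gt]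

lemma colInner_eq_zero_of_notMem_stripeSet (hD : IsConvDict N n m D) {a b : ZMod N × Fin m}
    (hb : b ∉ stripeSet N n m a.1) : colInner D a b = 0 := by
  refine Finset.sum_eq_zero fun t _ => ?_
  by_cases ha : (t - a.1).val < n
  · by_cases hb' : (t - b.1).val < n
    · exact absurd (mem_stripeSet_of_val_sub_lt ha hb') hb
    · rw [hD.apply_eq_zero_of_le_val_sub (not_lt.mp hb'), mul_zero]
  · rw [hD.apply_eq_zero_of_le_val_sub (not_lt.mp ha), zero_mul]

lemma sum_mul_mulVec_eq_sum_stripe (hD : IsConvDict N n m D) (Γ : ZMod N × Fin m → ℝ)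
    (a : ZMod N × Fin m) :
    ∑ t, D t a * D.mulVec Γ t =
      ∑ b ∈ (stripeSet N n m a.1).filter (Γ · ≠ 0), Γ b * colInner D a b := by
  rw [sum_mul_mulVec_eq_sum_colInner]
  refine (Finset.sum_subset (Finset.subset_univ _) fun b _ hb => ?_).symm
  by_cases hbs : b ∈ stripeSet N n m a.1
  · rw [of_not_not fun h => hb (Finset.mem_filter.mpr ⟨hbs, h⟩), zero_mul]
  · rw [hD.colInner_eq_zero_of_notMem_stripeSet hbs, mul_zero]

end IsConvDict

lemma abs_sum_mul_colInner_le {N m : ℕ} [NeZero N] (D : Matrix (ZMod N) (ZMod N × Fin m) ℝ)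
    {Γ : ZMod N × Fin m → ℝ} {a : ZMod N × Fin m} {s : Finset (ZMod N × Fin m)} {M : ℝ}
    (has : a ∉ s) (hM : ∀ b ∈ s, |Γ b| ≤ M) :
    |∑ b ∈ s, Γ b * colInner D a b| ≤ s.card * (M * mutualCoherence D) := by
  refine (Finset.abs_sum_le_sum_abs _ _).trans ?_
  rw [← nsmul_eq_mul]
  refine Finset.sum_le_card_nsmul _ _ _ fun b hb => ?_
  rw [abs_mul]
  exact mul_le_mul (hM b hb)
    (abs_colInner_le_mutualCoherence D fun h => has (h ▸ hb)) (abs_nonneg _)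
    ((abs_nonneg _).trans (hM b hb))

theorem omp_first_step_bounds_general (N n m : ℕ) [NeZero N]
    (hn : 1 ≤ n)
    (D : Matrix (ZMod N) (ZMod N × Fin m) ℝ) (hD : IsConvDict N n m D)
    (Γ : ZMod N × Fin m → ℝ)
    (i₀ : ZMod N × Fin m) (hi₀ : i₀ ∈ Function.support Γ)
    (hmax : ∀ a ∈ Function.support Γ, |Γ a| ≤ |Γ i₀|) :
    |Γ i₀| - |Γ i₀| * ((l0inf N n m Γ : ℝ) - 1) * mutualCoherence D ≤
        |∑ t, D t i₀ * D.mulVec Γ t| ∧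
      ∀ j ∉ Function.support Γ,
        |∑ t, D t j * D.mulVec Γ t| ≤
          |Γ i₀| * (l0inf N n m Γ : ℝ) * mutualCoherence D := by
  set S := fun a : ZMod N × Fin m => (stripeSet N n m a.1).filter (Γ · ≠ 0)
  have hS : ∀ a, ∀ b ∈ S a, |Γ b| ≤ |Γ i₀| := fun a b hb => hmax b (Finset.mem_filter.mp hb).2
  have hcard : ∀ a, ((S a).card : ℝ) * (|Γ i₀| * mutualCoherence D) ≤
      l0inf N n m Γ * (|Γ i₀| * mutualCoherence D) := fun a =>
    mul_le_mul_of_nonneg_right (mod_cast card_stripeSet_support_le_l0inf Γ a.1)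
      (mul_nonneg (abs_nonneg _) (mutualCoherence_nonneg D))
  constructor
  · have hi₀S : i₀ ∈ S i₀ := Finset.mem_filter.mpr ⟨self_mem_stripeSet hn i₀, hi₀⟩
    have hoff := abs_sum_mul_colInner_le D (Finset.notMem_erase i₀ (S i₀))
      fun b hb => hS i₀ b (Finset.mem_of_mem_erase hb)
    rw [Finset.card_erase_of_mem hi₀S, Nat.cast_pred (Finset.card_pos.mpr ⟨i₀, hi₀S⟩)] at hoff
    rw [hD.sum_mul_mulVec_eq_sum_stripe, ← Finset.add_sum_erase _ _ hi₀S, hD.colInner_self,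
      mul_one]
    have htriangle := abs_sub_abs_le_abs_add (Γ i₀) (∑ b ∈ (S i₀).erase i₀, Γ b * colInner D i₀ b)
    linarith [hcard i₀]
  · intro j hj
    have hjS : j ∉ S j := fun h => (Finset.mem_filter.mp h).2 (Function.notMem_support.mp hj)
    rw [hD.sum_mul_mulVec_eq_sum_stripe]
    linarith [abs_sum_mul_colInner_le D hjS (hS j), hcard j]

/-- First-step OMP inequality with explicit bounds: for `X = DΓ` and `i₀` an
index of maximal magnitude of `Γ` over its support, (i) `|⟨d_{i₀}, X⟩|` is at least
`|Γ_{i₀}| - |Γ_{i₀}|(‖Γ‖_{0,∞} - 1)μ(D)`, and (ii) for every `j` outside the support,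
`|⟨d_j, X⟩| ≤ |Γ_{i₀}| ‖Γ‖_{0,∞} μ(D)`. -/
theorem omp_first_step_bounds (N n m : ℕ) [NeZero N]
    (hm : 1 ≤ m) (hn : 1 ≤ n) (hN : 2 * n - 1 ≤ N)
    (D : Matrix (ZMod N) (ZMod N × Fin m) ℝ) (hD : IsConvDict N n m D)
    (Γ : ZMod N × Fin m → ℝ)
    (i₀ : ZMod N × Fin m) (hi₀ : i₀ ∈ Function.support Γ)
    (hmax : ∀ a ∈ Function.support Γ, |Γ a| ≤ |Γ i₀|) :
    |Γ i₀| - |Γ i₀| * ((l0inf N n m Γ : ℝ) - 1) * mutualCoherence D ≤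
        |∑ t, D t i₀ * D.mulVec Γ t| ∧
      ∀ j ∉ Function.support Γ,
        |∑ t, D t j * D.mulVec Γ t| ≤
          |Γ i₀| * (l0inf N n m Γ : ℝ) * mutualCoherence D :=
  omp_first_step_bounds_general N n m hn D hD Γ i₀ hi₀ hmax

end
end
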